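/- If A and B are algebraic structures of a common functional language L, A is equationally Noetherian with respect to L(A)-equations, and B is equationally Noetherian with respect to L(B)-equations, then the direct product C = A × B is equationally Noetherian with respect to L(C)-equations. -/

import Mathlib

/-!
Projecting the constants of a system `S` over `A × B` to either factor gives systems `S^A`, `S^B`
with `V(S) = V(S^A) × V(S^B)`, since an equation holds in `A × B` iff both of its projections
hold. Choosing finitely many equations of `S` whose projections cut out `V(S^A)`, and finitely
many whose projections cut out `V(S^B)`, their union is a finite subsystem equivalent to `S`.
-/

/-- Terms of a functional language with function symbols `F` of arities `ar`,
constants from `A`, and variables among `x_1, ..., x_n`. -/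
inductive FTerm (F : Type) (ar : F → ℕ) (A : Type) (n : ℕ) where
  | var : Fin n → FTerm F ar A n
  | const : A → FTerm F ar A n
  | func : (f : F) → (Fin (ar f) → FTerm F ar A n) → FTerm F ar A n

/-- Evaluation of a term in an `L`-structure on `A` given by the interpretation `I`
of the function symbols. -/
def FTerm.eval {F : Type} {ar : F → ℕ} {A : Type} {n : ℕ}
    (I : (f : F) → (Fin (ar f) → A) → A) (v : Fin n → A) : FTerm F ar A n → A
  | .var i => v i
  | .const a => a
  | .func f ts => I f (fun i => (ts i).eval I v)

def SolSet {F : Type} {ar : F → ℕ} {A : Type} {n : ℕ}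
    (I : (f : F) → (Fin (ar f) → A) → A)
    (S : Set (FTerm F ar A n × FTerm F ar A n)) : Set (Fin n → A) :=
  {v | ∀ e ∈ S, e.1.eval I v = e.2.eval I v}

/-- An `L`-structure `(A, I)` is equationally Noetherian if every system of
`L(A)`-equations in finitely many variables is equivalent to a finite subsystem. -/
def EquationallyNoetherian {F : Type} (ar : F → ℕ) (A : Type)
    (I : (f : F) → (Fin (ar f) → A) → A) : Prop :=
  ∀ (n : ℕ) (S : Set (FTerm F ar A n × FTerm F ar A n)),
    ∃ S' ⊆ S, S'.Finite ∧ SolSet I S' = SolSet I S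

/-- The product structure on `A × B`, with function symbols interpreted
componentwise. -/
def prodInterp {F : Type} {ar : F → ℕ} {A B : Type}
    (IA : (f : F) → (Fin (ar f) → A) → A) (IB : (f : F) → (Fin (ar f) → B) → B) :
    (f : F) → (Fin (ar f) → A × B) → A × B :=
  fun f v => (IA f (fun i => (v i).1), IB f (fun i => (v i).2))

section

variable {F : Type} {ar : F → ℕ} {A B : Type} {n : ℕ}

def FTerm.mapConst (g : A → B) : FTerm F ar A n → FTerm F ar B n
  | .var i => .var i
  | .const a => .const (g a)
  | .func f ts => .func f (fun i => (ts i).mapConst g)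

theorem FTerm.eval_mapConst {IA : (f : F) → (Fin (ar f) → A) → A}
    {IB : (f : F) → (Fin (ar f) → B) → B} {g : A → B}
    (hg : ∀ f x, g (IA f x) = IB f (g ∘ x)) (v : Fin n → A) (t : FTerm F ar A n) :
    (t.mapConst g).eval IB (g ∘ v) = g (t.eval IA v) := by
  induction t with
  | var i => rfl
  | const a => rfl
  | func f ts ih =>
    simp only [FTerm.mapConst, FTerm.eval, hg]
    exact congrArg (IB f) (funext ih)

theorem comp_mem_solSet_image_mapConst_iff {IA : (f : F) → (Fin (ar f) → A) → A}
    {IB : (f : F) → (Fin (ar f) → B) → B} {g : A → B}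
    (hg : ∀ f x, g (IA f x) = IB f (g ∘ x)) (v : Fin n → A)
    (S : Set (FTerm F ar A n × FTerm F ar A n)) :
    g ∘ v ∈ SolSet IB (Prod.map (FTerm.mapConst g) (FTerm.mapConst g) '' S) ↔
      ∀ e ∈ S, g (e.1.eval IA v) = g (e.2.eval IA v) := by
  simp only [SolSet, Set.mem_ofPred_eq, Set.forall_mem_image, Prod.map_fst, Prod.map_snd,
    FTerm.eval_mapConst hg]

theorem solSet_anti {I : (f : F) → (Fin (ar f) → A) → A}
    {S T : Set (FTerm F ar A n × FTerm F ar A n)} (h : S ⊆ T) :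
    SolSet I T ⊆ SolSet I S :=
  fun _ hv e he => hv e (h he)

theorem mem_solSet_prodInterp_iff (IA : (f : F) → (Fin (ar f) → A) → A)
    (IB : (f : F) → (Fin (ar f) → B) → B) (v : Fin n → A × B)
    (S : Set (FTerm F ar (A × B) n × FTerm F ar (A × B) n)) :
    v ∈ SolSet (prodInterp IA IB) S ↔
      Prod.fst ∘ v ∈
          SolSet IA (Prod.map (FTerm.mapConst Prod.fst) (FTerm.mapConst Prod.fst) '' S) ∧
        Prod.snd ∘ v ∈
          SolSet IB (Prod.map (FTerm.mapConst Prod.snd) (FTerm.mapConst Prod.snd) '' S) := by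
  rw [comp_mem_solSet_image_mapConst_iff (IA := prodInterp IA IB) (g := Prod.fst)
      (fun _ _ => rfl),
    comp_mem_solSet_image_mapConst_iff (IA := prodInterp IA IB) (g := Prod.snd)
      (fun _ _ => rfl)]
  simp only [SolSet, Set.mem_ofPred_eq, Prod.ext_iff, forall_and]

theorem EquationallyNoetherian.exists_finite_solSet_image_eq
    {I : (f : F) → (Fin (ar f) → A) → A} (hI : EquationallyNoetherian ar A I) {X : Type}
    (p : X → FTerm F ar A n × FTerm F ar A n)
    (S : Set X) : ∃ T ⊆ S, T.Finite ∧ SolSet I (p '' T) = SolSet I (p '' S) := by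
  obtain ⟨S', hS'S, hS'fin, hS'⟩ := hI n (p '' S)
  obtain ⟨T, hTS, hTfin, rfl⟩ :=
    Set.exists_subset_image_finite_and.mp ⟨S', hS'S, hS'fin, rfl⟩
  exact ⟨T, hTS, hTfin, hS'⟩

end

/-- If `A` is equationally Noetherian w.r.t. `L(A)`-equations and `B` is equationally
Noetherian w.r.t. `L(B)`-equations, then the direct product `C = A × B` is
equationally Noetherian w.r.t. `L(C)`-equations. -/
theorem prod_equationally_noetherian {F : Type} {ar : F → ℕ} {A B : Type}
    (IA : (f : F) → (Fin (ar f) → A) → A) (IB : (f : F) → (Fin (ar f) → B) → B)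
    (hA : EquationallyNoetherian ar A IA) (hB : EquationallyNoetherian ar B IB) :
    EquationallyNoetherian ar (A × B) (prodInterp IA IB) := by
  intro n S
  obtain ⟨TA, hTA, hTAfin, hSolA⟩ := hA.exists_finite_solSet_image_eq
    (Prod.map (FTerm.mapConst Prod.fst) (FTerm.mapConst Prod.fst)) S
  obtain ⟨TB, hTB, hTBfin, hSolB⟩ := hB.exists_finite_solSet_image_eq
    (Prod.map (FTerm.mapConst Prod.snd) (FTerm.mapConst Prod.snd)) S
  refine ⟨TA ∪ TB, Set.union_subset hTA hTB, hTAfin.union hTBfin,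
    subset_antisymm ?_ (solSet_anti (Set.union_subset hTA hTB))⟩
  intro v hv
  rw [mem_solSet_prodInterp_iff] at hv ⊢
  exact ⟨hSolA ▸ solSet_anti (Set.image_mono Set.subset_union_left) hv.1,
    hSolB ▸ solSet_anti (Set.image_mono Set.subset_union_right) hv.2⟩
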